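/- arXiv:math/0409519 — 4 statements merged into one kernel-verified Lean document; each statement's English description precedes it below -/
import Mathlib

section
/- Let R be a valuation ring with maximal ideal P which is not a field, and let F = E(R/Rr) be an injective hull of R/Rr for some nonzero r ∈ P. Then R is almost maximal if and only if F is a uniserial R-module. -/
universe u

section Defs
variable (R : Type u) [CommRing R]

/-- A (generalized) valuation ring: a commutative ring whose ideals are totally
ordered by inclusion. -/
def IdealsTotallyOrdered : Prop := ∀ I J : Ideal R, I ≤ J ∨ J ≤ I

/-- Almost maximal: every family of cosets `a i + L i` that is totally ordered by
inclusion and whose ideals have nonzero intersection has nonempty intersection. -/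
def AlmostMaximalRing : Prop :=
  ∀ (ι : Type u) (a : ι → R) (L : ι → Ideal R),
    (∀ i j : ι, {x : R | x - a i ∈ L i} ⊆ {x : R | x - a j ∈ L j} ∨
      {x : R | x - a j ∈ L j} ⊆ {x : R | x - a i ∈ L i}) →
    (⨅ i, L i) ≠ ⊥ →
    (⋂ i, {x : R | x - a i ∈ L i}).Nonempty

/-- fp-injective (absolutely pure): `Ext¹(F, E) = 0` for every finitely presented `F`. -/
def FpInjectiveModule (E : Type u) [AddCommGroup E] [Module R E] : Prop :=
  ∀ (F : Type u) [AddCommGroup F] [Module R F], Module.FinitePresentation R F →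
    Subsingleton (((Ext R (ModuleCat.{u} R) 1).obj
      (Opposite.op (ModuleCat.of R F))).obj (ModuleCat.of R E))

/-- Locally injective: every homomorphism from a finitely generated submodule `A` of an
arbitrary module `B` into `E` extends to `B`. -/
def LocallyInjectiveModule (E : Type u) [AddCommGroup E] [Module R E] : Prop :=
  ∀ (B : Type u) [AddCommGroup B] [Module R B] (A : Submodule R B), A.FG →
    ∀ f : A →ₗ[R] E, ∃ g : B →ₗ[R] E, ∀ a : A, g a = f a

/-- `f : M →ₗ[R] E` exhibits `E` as an injective hull of `M`: `E` is injective, `f` is an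
embedding, and the image of `f` is an essential submodule of `E`. -/
def IsInjectiveHull {M E : Type u} [AddCommGroup M] [Module R M]
    [AddCommGroup E] [Module R E] (f : M →ₗ[R] E) : Prop :=
  Module.Injective R E ∧ Function.Injective f ∧
    ∀ K : Submodule R E, K ≠ ⊥ → K ⊓ LinearMap.range f ≠ ⊥

/-- An indecomposable module: nonzero, and no nontrivial direct-summand decomposition. -/
def IndecomposableModule (U : Type u) [AddCommGroup U] [Module R U] : Prop :=
  Nontrivial U ∧ ∀ N₁ N₂ : Submodule R U, IsCompl N₁ N₂ → N₁ = ⊥ ∨ N₂ = ⊥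

def CountablyGeneratedModule (M : Type u) [AddCommGroup M] [Module R M] : Prop :=
  ∃ s : Set M, s.Countable ∧ Submodule.span R s = ⊤

/-- An IF-ring: every injective module is flat. -/
def IsIFRing : Prop :=
  ∀ (M : Type u) [AddCommGroup M] [Module R M], Module.Injective R M → Module.Flat R M

/-- Countably cogenerated: embeds in a product of countably many injective hulls of
simple modules. -/
def CountablyCogeneratedModule (M : Type u) [AddCommGroup M] [Module R M] : Prop :=
  ∃ (S : ℕ → Type u) (_ : ∀ n, AddCommGroup (S n)) (_ : ∀ n, Module R (S n)),
    (∀ n, Module.Injective R (S n)) ∧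
    (∀ n, ∃ T : Submodule R (S n), IsSimpleModule R T ∧
       ∀ K : Submodule R (S n), K ≠ ⊥ → K ⊓ T ≠ ⊥) ∧
    ∃ f : M →ₗ[R] (∀ n, S n), Function.Injective f

/-- A uniserial module: submodules totally ordered by inclusion. -/
def UniserialModule (U : Type u) [AddCommGroup U] [Module R U] : Prop :=
  ∀ N₁ N₂ : Submodule R U, N₁ ≤ N₂ ∨ N₂ ≤ N₁

/-- A uniform module: any two nonzero submodules intersect nontrivially. -/
def UniformModule (U : Type u) [AddCommGroup U] [Module R U] : Prop :=
  ∀ N₁ N₂ : Submodule R U, N₁ ≠ ⊥ → N₂ ≠ ⊥ → N₁ ⊓ N₂ ≠ ⊥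

end Defs

set_option linter.unusedSectionVars false
set_option linter.unusedVariables false

namespace Stmt14

variable {R : Type u} [CommRing R]

lemma mem_span_or (hval : IdealsTotallyOrdered R) (a b : R) :
    a ∈ Ideal.span {b} ∨ b ∈ Ideal.span {a} := by
  rcases hval (Ideal.span {a}) (Ideal.span {b}) with h | h
  · exact Or.inl (h (Ideal.mem_span_singleton_self a))
  · exact Or.inr (h (Ideal.mem_span_singleton_self b))

lemma subset_coset {a a' : R} {L L' : Ideal R}
    (h : {x : R | x - a ∈ L} ⊆ {x : R | x - a' ∈ L'}) : a - a' ∈ L' ∧ L ≤ L' := by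
  have ha : a - a' ∈ L' := h (by simp)
  refine ⟨ha, fun l hl => ?_⟩
  have h1 : (a + l) - a' ∈ L' := h (by simpa using hl)
  have h2 : ((a + l) - a') - (a - a') ∈ L' := sub_mem h1 ha
  simpa using h2

lemma coset_subset {a a' : R} {L L' : Ideal R} (hd : a - a' ∈ L') (hL : L ≤ L') :
    {x : R | x - a ∈ L} ⊆ {x : R | x - a' ∈ L'} := by
  intro x hx
  have : (x - a) + (a - a') ∈ L' := add_mem (hL hx) hd
  simpa using this

lemma AMstrong (hAM : AlmostMaximalRing R) (hval : IdealsTotallyOrdered R)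
    (ι : Type u) (a : ι → R) (L : ι → Ideal R)
    (hchain : ∀ i j : ι, {x : R | x - a i ∈ L i} ⊆ {x : R | x - a j ∈ L j} ∨
      {x : R | x - a j ∈ L j} ⊆ {x : R | x - a i ∈ L i})
    (hextra : (∃ p q : R, p ≠ 0 ∧ q ≠ 0 ∧ p * q = 0) ∨ (⨅ i, L i) ≠ ⊥) :
    (⋂ i, {x : R | x - a i ∈ L i}).Nonempty := by
  by_cases hbot : (⨅ i, L i) = ⊥
  swap
  · exact hAM ι a L hchain hbot
  rcases hextra with ⟨p, v, hp, hv, hpv⟩ | h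
  swap
  · exact absurd hbot h
  classical
  have hex : ∃ i₁, L i₁ ≤ Ideal.span {v} := by
    by_contra hcon
    push_neg at hcon
    have hall : ∀ i, v ∈ L i := fun i => by
      rcases hval (L i) (Ideal.span {v}) with h' | h'
      · exact absurd h' (hcon i)
      · exact h' (Ideal.mem_span_singleton_self v)
    have hmem : v ∈ (⨅ i, L i) := (Submodule.mem_iInf _).mpr hall
    rw [hbot] at hmem
    exact hv (by simpa using hmem)
  obtain ⟨i₁, hi₁⟩ := hex
  have hdiff : ∀ i : {i : ι // L i ≤ Ideal.span {v}}, ∃ α, α * v = a i.1 - a i₁ := by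
    intro i
    have hmem : a i.1 - a i₁ ∈ Ideal.span {v} := by
      rcases hchain i.1 i₁ with h' | h'
      · exact hi₁ (subset_coset h').1
      · simpa using neg_mem (i.2 (subset_coset h').1)
    exact Ideal.mem_span_singleton'.mp hmem
  choose α hα using hdiff
  set C : {i : ι // L i ≤ Ideal.span {v}} → Ideal R :=
    fun i => Submodule.comap (LinearMap.toSpanSingleton R R v) (L i.1) with hC
  have hCmem : ∀ (i) (w : R), w ∈ C i ↔ w * v ∈ L i.1 := by
    intro i w
    simp [hC, LinearMap.toSpanSingleton_apply, smul_eq_mul]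
  have hchain' : ∀ i j : {i : ι // L i ≤ Ideal.span {v}},
      {x : R | x - α i ∈ C i} ⊆ {x : R | x - α j ∈ C j} ∨
      {x : R | x - α j ∈ C j} ⊆ {x : R | x - α i ∈ C i} := by
    have key : ∀ i j : {i : ι // L i ≤ Ideal.span {v}},
        {x : R | x - a i.1 ∈ L i.1} ⊆ {x : R | x - a j.1 ∈ L j.1} →
        {x : R | x - α i ∈ C i} ⊆ {x : R | x - α j ∈ C j} := by
      intro i j hsub
      obtain ⟨hd, hL⟩ := subset_coset hsub
      refine coset_subset ?_ ?_
      · rw [hCmem]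
        have : (α i - α j) * v = a i.1 - a j.1 := by
          rw [sub_mul, hα i, hα j]; ring
        rw [this]; exact hd
      · intro w hw
        rw [hCmem] at hw ⊢
        exact hL hw
    intro i j
    rcases hchain i.1 j.1 with h' | h'
    · exact Or.inl (key i j h')
    · exact Or.inr (key j i h')
  have hinf : (⨅ i, C i) ≠ ⊥ := by
    have hmem : p ∈ (⨅ i, C i) := by
      refine (Submodule.mem_iInf _).mpr fun i => ?_
      rw [hCmem]
      rw [hpv]
      exact zero_mem _
    intro hb
    rw [hb] at hmem
    exact hp (by simpa using hmem)
  obtain ⟨ξ, hξ⟩ := hAM _ α C hchain' hinf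
  refine ⟨a i₁ + ξ * v, Set.mem_iInter.mpr fun i => ?_⟩
  have hsol : ∀ (j : ι) (hj : L j ≤ Ideal.span {v}), (a i₁ + ξ * v) - a j ∈ L j := by
    intro j hj
    have h1 : ξ - α ⟨j, hj⟩ ∈ C ⟨j, hj⟩ := Set.mem_iInter.mp hξ ⟨j, hj⟩
    rw [hCmem] at h1
    have h2 : (ξ - α ⟨j, hj⟩) * v = (a i₁ + ξ * v) - a j := by
      rw [sub_mul, hα ⟨j, hj⟩]; ring
    rw [← h2]; exact h1
  by_cases hsub : L i ≤ Ideal.span {v}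
  · exact hsol i hsub
  · rcases hchain i₁ i with h' | h'
    · exact h' (hsol i₁ hi₁)
    · exact absurd (le_trans (subset_coset h').2 hi₁) hsub

lemma ann_le_span (hval : IdealsTotallyOrdered R) {c σ t : R} (hcσ : c * σ = t)
    (ht : t ≠ 0) {x : R} (hx : x * c = 0) : x ∈ Ideal.span {σ} := by
  rcases mem_span_or hval x σ with h | h
  · exact h
  · obtain ⟨m, hm⟩ := Ideal.mem_span_singleton'.mp h
    exfalso
    apply ht
    rw [← hcσ, ← hm]
    calc c * (m * x) = m * (x * c) := by ring
    _ = 0 := by rw [hx, mul_zero]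

variable [IsLocalRing R] {F : Type u} [AddCommGroup F] [Module R F]
  {r : R} {ιF : (R ⧸ Ideal.span {r}) →ₗ[R] F}

lemma quot_comparable (hval : IdealsTotallyOrdered R) {I : Ideal R}
    (N₁ N₂ : Submodule R (R ⧸ I)) : N₁ ≤ N₂ ∨ N₂ ≤ N₁ := by
  rcases hval (N₁.comap I.mkQ) (N₂.comap I.mkQ) with h | h
  · exact Or.inl ((Submodule.comap_le_comap_iff_of_surjective (Submodule.mkQ_surjective I)).mp h)
  · exact Or.inr ((Submodule.comap_le_comap_iff_of_surjective (Submodule.mkQ_surjective I)).mp h)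

lemma exists_ann_eq (hval : IdealsTotallyOrdered R) (hr : r ≠ 0)
    (hrP : r ∈ IsLocalRing.maximalIdeal R) (hF : IsInjectiveHull R ιF)
    {t : R} (ht0 : t ≠ 0) (htr : t ∈ Ideal.span {r}) :
    ∃ u : F, ∀ s : R, s • u = 0 ↔ s ∈ Ideal.span {t} := by
  obtain ⟨c, hc⟩ := Ideal.mem_span_singleton'.mp htr
  have hle : Ideal.span {r} ≤ Submodule.comap (c • (LinearMap.id : R →ₗ[R] R)) (Ideal.span {t}) := by
    intro x hx
    obtain ⟨e, he⟩ := Ideal.mem_span_singleton'.mp hx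
    simp only [Submodule.mem_comap, LinearMap.smul_apply, LinearMap.id_coe, id_eq, smul_eq_mul]
    refine Ideal.mem_span_singleton'.mpr ⟨e, ?_⟩
    rw [← hc, ← he]; ring
  set μ : (R ⧸ Ideal.span {r}) →ₗ[R] (R ⧸ Ideal.span {t}) :=
    Submodule.mapQ _ _ _ hle with hμ
  have hμapp : ∀ x : R, μ (Submodule.Quotient.mk x) = Submodule.Quotient.mk (c * x) := by
    intro x
    rw [hμ, Submodule.mapQ_apply]
    rfl
  have hμinj : Function.Injective μ := by
    rw [← LinearMap.ker_eq_bot, Submodule.eq_bot_iff]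
    intro z hz
    obtain ⟨x, rfl⟩ := Submodule.Quotient.mk_surjective _ z
    rw [LinearMap.mem_ker, hμapp] at hz
    have hcx : c * x ∈ Ideal.span {t} := (Submodule.Quotient.mk_eq_zero _).mp hz
    obtain ⟨z₂, hz₂⟩ := Ideal.mem_span_singleton'.mp hcx
    have h0 : (x - z₂ * r) * c = 0 := by
      rw [sub_mul]
      rw [show x * c = c * x from mul_comm _ _, ← hz₂, ← hc]; ring
    have hxr : x - z₂ * r ∈ Ideal.span {r} := ann_le_span hval hc ht0 h0
    have hx : x ∈ Ideal.span {r} := by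
      have := add_mem hxr (Ideal.mul_mem_left _ z₂ (Ideal.mem_span_singleton_self r))
      simpa using this
    exact (Submodule.Quotient.mk_eq_zero _).mpr hx
  obtain ⟨k, hk⟩ := hF.1.out μ hμinj ιF
  have hkinj : ∀ z, k z = 0 → z = 0 := by
    rcases quot_comparable hval (LinearMap.ker k) (LinearMap.range μ) with hcase | hcase
    · intro z hz
      obtain ⟨w, hw⟩ := hcase (LinearMap.mem_ker.mpr hz)
      have : ιF w = 0 := by rw [← hk w, hw, hz]
      have hw0 : w = 0 := by
        apply hF.2.1
        rw [this, map_zero]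
      rw [← hw, hw0, map_zero]
    · exfalso
      have h1 : ιF (Submodule.Quotient.mk 1) = 0 := by
        rw [← hk]
        exact LinearMap.mem_ker.mp (hcase ⟨Submodule.Quotient.mk 1, rfl⟩)
      have h2 : (Submodule.Quotient.mk 1 : R ⧸ Ideal.span {r}) = 0 := by
        apply hF.2.1
        rw [h1, map_zero]
      have h3 : (1 : R) ∈ Ideal.span {r} := (Submodule.Quotient.mk_eq_zero _).mp h2
      obtain ⟨e, he⟩ := Ideal.mem_span_singleton'.mp h3
      have : IsUnit r := IsUnit.of_mul_eq_one (a := r) e (by rw [mul_comm]; exact he)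
      exact ((IsLocalRing.mem_maximalIdeal r).mp hrP) this
  refine ⟨k (Submodule.Quotient.mk 1), fun s => ?_⟩
  have hs : s • k (Submodule.Quotient.mk 1) = k (Submodule.Quotient.mk s) := by
    rw [← map_smul]
    congr 1
    rw [← Submodule.Quotient.mk_smul]
    congr 1
    simp [smul_eq_mul]
  rw [hs]
  constructor
  · intro h0
    have := hkinj _ h0
    exact (Submodule.Quotient.mk_eq_zero _).mp this
  · intro hmem
    rw [(Submodule.Quotient.mk_eq_zero _).mpr hmem, map_zero]

lemma mk_mul_smul {I : Ideal R} (e m : R) :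
    (Submodule.Quotient.mk (e * m) : R ⧸ I) = e • Submodule.Quotient.mk m := by
  rw [← smul_eq_mul, Submodule.Quotient.mk_smul]

lemma exists_common (hval : IdealsTotallyOrdered R) (hF : IsInjectiveHull R ιF)
    {z w : F} (hz : z ≠ 0) (hw : w ≠ 0) :
    ∃ a b : R, a • z = b • w ∧ a • z ≠ 0 := by
  have hz' : Submodule.span R {z} ≠ ⊥ := by
    simpa [Submodule.span_singleton_eq_bot] using hz
  have hw' : Submodule.span R {w} ≠ ⊥ := by
    simpa [Submodule.span_singleton_eq_bot] using hw
  obtain ⟨v, hv, hv0⟩ := (Submodule.ne_bot_iff _).mp (hF.2.2 _ hz')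
  obtain ⟨v', hv', hv'0⟩ := (Submodule.ne_bot_iff _).mp (hF.2.2 _ hw')
  obtain ⟨a, ha⟩ := Submodule.mem_span_singleton.mp hv.1
  obtain ⟨b, hb⟩ := Submodule.mem_span_singleton.mp hv'.1
  obtain ⟨q, hq⟩ := hv.2
  obtain ⟨q', hq'⟩ := hv'.2
  obtain ⟨m, rfl⟩ := Submodule.Quotient.mk_surjective _ q
  obtain ⟨m', rfl⟩ := Submodule.Quotient.mk_surjective _ q'
  rcases mem_span_or hval m m' with h | h
  · obtain ⟨e, he⟩ := Ideal.mem_span_singleton'.mp h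
    refine ⟨a, e * b, ?_, by rw [ha]; exact hv0⟩
    rw [ha, ← hq, ← he, mk_mul_smul, map_smul, hq', ← hb, ← mul_smul]
  · obtain ⟨e, he⟩ := Ideal.mem_span_singleton'.mp h
    refine ⟨e * a, b, ?_, ?_⟩
    · rw [mul_smul, ha, ← hq, ← map_smul, ← mk_mul_smul, he, hq', hb]
    · rw [mul_smul, ha, ← hq, ← map_smul, ← mk_mul_smul, he, hq']
      exact hv'0

lemma baer_ext (hval : IdealsTotallyOrdered R) {F : Type u} [AddCommGroup F] [Module R F]
    (hinj : Module.Injective R F) (π : Type u) [Nonempty π] (γ : π → R) (b : π → R) (u : F)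
    (hWD : ∀ p q (s : R), s ∈ Ideal.span {γ p} → s ∈ Ideal.span {γ q} →
      (s * b p) • u = (s * b q) • u) :
    ∃ e : F, ∀ p, γ p • e = (γ p * b p) • u := by
  classical
  let I : Ideal R :=
    { carrier := {s | ∃ p, s ∈ Ideal.span {γ p}}
      add_mem' := by
        rintro s s' ⟨p, hp⟩ ⟨q, hq⟩
        rcases hval (Ideal.span {γ p}) (Ideal.span {γ q}) with h | h
        · exact ⟨q, add_mem (h hp) hq⟩
        · exact ⟨p, add_mem hp (h hq)⟩
      zero_mem' := ⟨Classical.arbitrary π, zero_mem _⟩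
      smul_mem' := by
        rintro c s ⟨p, hp⟩
        exact ⟨p, Submodule.smul_mem _ c hp⟩ }
  have hImem : ∀ z : I, ∃ p, (z : R) ∈ Ideal.span {γ p} := fun z => z.2
  choose sel hsel using hImem
  let f : I → F := fun z => ((z : R) * b (sel z)) • u
  have hfspec : ∀ (z : I) (p : π), (z : R) ∈ Ideal.span {γ p} → f z = ((z : R) * b p) • u :=
    fun z p hp => hWD (sel z) p _ (hsel z) hp
  have hcommon : ∀ z z' : I, ∃ p, (z : R) ∈ Ideal.span {γ p} ∧ (z' : R) ∈ Ideal.span {γ p} := by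
    intro z z'
    rcases hval (Ideal.span {γ (sel z)}) (Ideal.span {γ (sel z')}) with h | h
    · exact ⟨sel z', h (hsel z), hsel z'⟩
    · exact ⟨sel z, hsel z, h (hsel z')⟩
  let φ : I →ₗ[R] F :=
    { toFun := f
      map_add' := by
        intro z z'
        obtain ⟨p, hz, hz'⟩ := hcommon z z'
        have hzz' : ((z + z' : I) : R) ∈ Ideal.span {γ p} := add_mem hz hz'
        rw [hfspec _ p hzz', hfspec z p hz, hfspec z' p hz']
        rw [Submodule.coe_add, add_mul, add_smul]
      map_smul' := by
        intro c z
        have hcz : ((c • z : I) : R) ∈ Ideal.span {γ (sel z)} := by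
          rw [Submodule.coe_smul]
          exact Submodule.smul_mem _ c (hsel z)
        rw [RingHom.id_apply]
        show f (c • z) = c • f z
        rw [hfspec _ (sel z) hcz, hfspec z (sel z) (hsel z), Submodule.coe_smul,
          smul_eq_mul, mul_assoc, mul_smul] }
  obtain ⟨g, hg⟩ := hinj.out I.subtype (Submodule.injective_subtype I) φ
  refine ⟨g 1, fun p => ?_⟩
  have hmem : γ p ∈ I := ⟨p, Ideal.mem_span_singleton_self _⟩
  have h1 : γ p • g 1 = g (γ p) := by
    rw [← map_smul]
    congr 1
    rw [smul_eq_mul, mul_one]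
  have h2 : g (γ p) = φ ⟨γ p, hmem⟩ := hg ⟨γ p, hmem⟩
  have h3 : φ ⟨γ p, hmem⟩ = (γ p * b p) • u :=
    hfspec ⟨γ p, hmem⟩ p (Ideal.mem_span_singleton_self _)
  rw [h1, h2, h3]


lemma backward (hval : IdealsTotallyOrdered R) (hr : r ≠ 0)
    (hrP : r ∈ IsLocalRing.maximalIdeal R) (hF : IsInjectiveHull R ιF)
    (hU : UniserialModule R F) : AlmostMaximalRing R := by
  intro ι a L hchain hbot
  classical
  rcases isEmpty_or_nonempty ι with hempty | hne
  · exact ⟨0, Set.mem_iInter.mpr fun i => hempty.elim i⟩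
  by_cases hmin : ∃ i₀, ∀ i, {x : R | x - a i₀ ∈ L i₀} ⊆ {x : R | x - a i ∈ L i}
  · obtain ⟨i₀, h₀⟩ := hmin
    exact ⟨a i₀, Set.mem_iInter.mpr fun i => h₀ i (by simp)⟩
  push_neg at hmin
  have hstrict : ∀ i₀, ∃ i, {x : R | x - a i ∈ L i} ⊆ {x : R | x - a i₀ ∈ L i₀} ∧
      ¬ {x : R | x - a i₀ ∈ L i₀} ⊆ {x : R | x - a i ∈ L i} := by
    intro i₀
    obtain ⟨i, hi⟩ := hmin i₀
    rcases hchain i₀ i with h | h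
    · exact absurd h hi
    · exact ⟨i, h, hi⟩
  have hT : ∃ t : R, t ≠ 0 ∧ t ∈ Ideal.span {r} ∧ ∀ i, t ∈ L i := by
    rcases hval (Ideal.span {r}) (⨅ i, L i) with h | h
    · exact ⟨r, hr, Ideal.mem_span_singleton_self r,
        fun i => (Submodule.mem_iInf _).mp (h (Ideal.mem_span_singleton_self r)) i⟩
    · obtain ⟨t, ht, ht0⟩ := (Submodule.ne_bot_iff _).mp hbot
      exact ⟨t, ht0, h ht, fun i => (Submodule.mem_iInf _).mp ht i⟩
  obtain ⟨t, ht0, htr, htL⟩ := hT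
  obtain ⟨u, hu⟩ := exists_ann_eq hval hr hrP hF ht0 htr
  have htu : t • u = 0 := (hu t).mpr (Ideal.mem_span_singleton_self t)
  let π := {p : ι × ι // {x : R | x - a p.1 ∈ L p.1} ⊆ {x : R | x - a p.2 ∈ L p.2} ∧
    ¬ {x : R | x - a p.2 ∈ L p.2} ⊆ {x : R | x - a p.1 ∈ L p.1} ∧ L p.2 ≠ ⊤}
  -- π is nonempty
  have hneπ : Nonempty π := by
    obtain ⟨j₁, hj₁⟩ := hstrict (Classical.arbitrary ι)
    have hLj₁ : L j₁ ≠ ⊤ := by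
      intro htop
      apply hj₁.2
      intro x hx
      show x - a j₁ ∈ L j₁
      rw [htop]; exact Submodule.mem_top
    obtain ⟨j₂, hj₂⟩ := hstrict j₁
    exact ⟨⟨(j₂, j₁), hj₂.1, hj₂.2, hLj₁⟩⟩
  -- data for each pair
  have hdata : ∀ p : π, ∃ σ γ : R, σ ∈ L p.1.2 ∧ σ ∈ IsLocalRing.maximalIdeal R ∧
      L p.1.1 ≤ Ideal.span {σ} ∧ γ * σ = t := by
    intro p
    have hle : L p.1.1 ≤ L p.1.2 := (subset_coset p.2.1).2
    have hne' : L p.1.1 ≠ L p.1.2 := by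
      intro heq
      apply p.2.2.1
      have hd : a p.1.2 - a p.1.1 ∈ L p.1.1 := by
        rw [heq]
        simpa using neg_mem (subset_coset p.2.1).1
      exact coset_subset hd (le_of_eq heq.symm)
    obtain ⟨σ, hσ2, hσ1⟩ := SetLike.exists_of_lt (lt_of_le_of_ne hle hne')
    have hσP : σ ∈ IsLocalRing.maximalIdeal R := IsLocalRing.le_maximalIdeal p.2.2.2 hσ2
    have hL1σ : L p.1.1 ≤ Ideal.span {σ} := by
      rcases hval (L p.1.1) (Ideal.span {σ}) with h | h
      · exact h
      · exact absurd (h (Ideal.mem_span_singleton_self σ)) hσ1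
    obtain ⟨γ, hγ⟩ := Ideal.mem_span_singleton'.mp (hL1σ (htL p.1.1))
    exact ⟨σ, γ, hσ2, hσP, hL1σ, hγ⟩
  choose σf γf hσ2 hσP hL1σ hγ using hdata
  have hγ0 : ∀ p : π, γf p ≠ 0 := by
    intro p h0
    apply ht0
    rw [← hγ p, h0, zero_mul]
  -- well-definedness for the Baer extension
  have hWD : ∀ p q (s : R), s ∈ Ideal.span {γf p} → s ∈ Ideal.span {γf q} →
      (s * a p.1.1) • u = (s * a q.1.1) • u := by
    have key : ∀ p q : π, ∀ s : R, s ∈ Ideal.span {γf q} →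
        {x : R | x - a p.1.1 ∈ L p.1.1} ⊆ {x : R | x - a q.1.1 ∈ L q.1.1} →
        (s * a p.1.1) • u = (s * a q.1.1) • u := by
      intro p q s hs hsub
      have hd : a p.1.1 - a q.1.1 ∈ Ideal.span {σf q} := hL1σ q (subset_coset hsub).1
      obtain ⟨n, hn⟩ := Ideal.mem_span_singleton'.mp hd
      obtain ⟨m, hm⟩ := Ideal.mem_span_singleton'.mp hs
      have hz : (s * a p.1.1 - s * a q.1.1) • u = 0 := by
        have heq : s * a p.1.1 - s * a q.1.1 = (m * n) * t := by
          rw [← hγ q, ← mul_sub, ← hm, ← hn]; ring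
        rw [heq, mul_smul, htu, smul_zero]
      rw [sub_smul] at hz
      exact sub_eq_zero.mp hz
    intro p q s hsp hsq
    rcases hchain p.1.1 q.1.1 with h | h
    · exact key p q s hsq h
    · exact (key q p s hsp h).symm
  obtain ⟨e, he⟩ := baer_ext hval hF.1 π γf (fun p => a p.1.1) u hWD
  -- if e = x • u then x solves the system
  have hfinish : ∀ x : R, x • u = e → (⋂ i, {x : R | x - a i ∈ L i}).Nonempty := by
    intro x hx
    refine ⟨x, Set.mem_iInter.mpr fun i => ?_⟩
    show x - a i ∈ L i
    by_cases hLi : L i = ⊤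
    · rw [hLi]; exact Submodule.mem_top
    · obtain ⟨j, hj1, hj2⟩ := hstrict i
      let p : π := ⟨(j, i), hj1, hj2, hLi⟩
      have h2 : (γf p * x) • u = (γf p * a j) • u := by
        rw [mul_smul, hx, he p]
      have h1 : (γf p * (x - a j)) • u = 0 := by
        rw [mul_sub, sub_smul, h2, sub_self]
      obtain ⟨z, hz⟩ := Ideal.mem_span_singleton'.mp ((hu _).mp h1)
      have hw : (x - a j - z * σf p) * γf p = 0 := by
        have hexp : (x - a j - z * σf p) * γf p
            = γf p * (x - a j) - z * (γf p * σf p) := by ring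
        rw [hexp, hγ p, ← hz, sub_self]
      have hmem : x - a j - z * σf p ∈ Ideal.span {σf p} := ann_le_span hval (hγ p) ht0 hw
      have hmem2 : x - a j ∈ Ideal.span {σf p} := by
        have := add_mem hmem (Ideal.mul_mem_left _ z (Ideal.mem_span_singleton_self (σf p)))
        simpa using this
      have hxj : x - a j ∈ L i := by
        have hspan : Ideal.span {σf p} ≤ L i := by
          rw [Ideal.span_singleton_le_iff_mem]
          exact hσ2 p
        exact hspan hmem2
      have hji : a j - a i ∈ L i := (subset_coset hj1).1
      have := add_mem hxj hji
      simpa using this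
  -- dichotomy
  rcases hU (Submodule.span R {e}) (Submodule.span R {u}) with hc | hc
  · obtain ⟨x, hx⟩ := Submodule.mem_span_singleton.mp (hc (Submodule.mem_span_singleton_self e))
    exact hfinish x hx
  · obtain ⟨d, hd⟩ := Submodule.mem_span_singleton.mp (hc (Submodule.mem_span_singleton_self u))
    by_cases hdu : IsUnit d
    · obtain ⟨d₀, rfl⟩ := hdu
      refine hfinish (↑d₀⁻¹) ?_
      rw [← hd, ← mul_smul, Units.inv_mul, one_smul]
    · exfalso
      have hdP : d ∈ IsLocalRing.maximalIdeal R := (IsLocalRing.mem_maximalIdeal d).mpr hdu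
      have hp0 : π := Classical.arbitrary π
      set p := hp0
      have h1 : γf p • e = (γf p * a p.1.1) • u := he p
      have h2 : (γf p * (1 - a p.1.1 * d)) • e = 0 := by
        have h2a : (γf p * (a p.1.1 * d)) • e = (γf p * a p.1.1) • u := by
          rw [← hd, ← mul_smul, mul_assoc]
        rw [mul_sub, mul_one, sub_smul, h2a, ← h1]
        exact sub_self _
      have h3 : (γf p * (1 - a p.1.1 * d)) • u = 0 := by
        rw [← hd, ← mul_smul, mul_comm, mul_smul, h2, smul_zero]
      obtain ⟨z, hz⟩ := Ideal.mem_span_singleton'.mp ((hu _).mp h3)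
      have hkill : γf p * (1 - (a p.1.1 * d + z * σf p)) = 0 := by
        have hexp : γf p * (1 - (a p.1.1 * d + z * σf p))
            = γf p * (1 - a p.1.1 * d) - z * (γf p * σf p) := by ring
        rw [hexp, hγ p, ← hz, sub_self]
      have hP : a p.1.1 * d + z * σf p ∈ IsLocalRing.maximalIdeal R :=
        add_mem (Ideal.mul_mem_left _ _ hdP) (Ideal.mul_mem_left _ _ (hσP p))
      have hunit : IsUnit (1 - (a p.1.1 * d + z * σf p)) :=
        IsLocalRing.isUnit_one_sub_self_of_mem_nonunits _ ((IsLocalRing.mem_maximalIdeal _).mp hP)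
      obtain ⟨w₀, hw₀⟩ := hunit
      apply hγ0 p
      calc γf p = γf p * (↑w₀ * ↑w₀⁻¹) := by rw [Units.mul_inv, mul_one]
      _ = (γf p * (1 - (a p.1.1 * d + z * σf p))) * ↑w₀⁻¹ := by rw [hw₀]; ring
      _ = 0 := by rw [hkill, zero_mul]

lemma bad_extract (hval : IdealsTotallyOrdered R) {x y : F} {s : R}
    (hsB : s • x ∈ Submodule.span R {y})
    (hbad : ∀ c : R, (s * c) • y ≠ s • x) :
    ∃ γ d : R, d ∈ IsLocalRing.maximalIdeal R ∧ s = d * γ ∧ γ • y = s • x := by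
  obtain ⟨γ, hγ⟩ := Submodule.mem_span_singleton.mp hsB
  have hγs : γ ∉ Ideal.span {s} := by
    intro h
    obtain ⟨m, hm⟩ := Ideal.mem_span_singleton'.mp h
    exact hbad m (by rw [show s * m = γ by rw [← hm]; ring]; exact hγ)
  have hsγ : s ∈ Ideal.span {γ} := (mem_span_or hval γ s).resolve_left hγs
  obtain ⟨d, hd⟩ := Ideal.mem_span_singleton'.mp hsγ
  refine ⟨γ, d, ?_, hd.symm, hγ⟩
  rw [IsLocalRing.mem_maximalIdeal, mem_nonunits_iff]
  intro hdu
  obtain ⟨d₀, rfl⟩ := hdu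
  exact hbad (↑d₀⁻¹)
    (by rw [show s * (↑d₀⁻¹ : R) = γ by
              rw [← hd, mul_comm (↑d₀ : R) γ, mul_assoc, Units.mul_inv, mul_one]]
        exact hγ)

lemma twoBadAux {x y : F} {s s' γ d γ' d' aa : R}
    (hd : d ∈ IsLocalRing.maximalIdeal R) (hd' : d' ∈ IsLocalRing.maximalIdeal R)
    (hs : s = d * γ) (hs' : s' = d' * γ')
    (hγy : γ • y = s • x) (hγ'x : γ' • x = s' • y)
    (hcomp : γ' = aa * γ)
    (hbad' : ∀ c : R, (s' * c) • x ≠ s' • y) : False := by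
  have hz : γ • (y - d • x) = 0 := by
    rw [smul_sub, smul_smul, mul_comm γ d, ← hs, hγy, sub_self]
  have hz' : γ' • (x - d' • y) = 0 := by
    rw [smul_sub, smul_smul, mul_comm γ' d', ← hs', hγ'x, sub_self]
  have hyd : (1 - d * d') • y = d • (x - d' • y) + (y - d • x) := by
    rw [sub_smul, one_smul, smul_sub, smul_smul]
    abel
  have key : (γ' * (1 - d * d')) • y = 0 := by
    rw [mul_smul, hyd, smul_add, smul_comm γ' d, hz', smul_zero, zero_add,
      hcomp, mul_smul, hz, smul_zero]
  have hP : d * d' ∈ IsLocalRing.maximalIdeal R := Ideal.mul_mem_right _ _ hd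
  have hunit : IsUnit (1 - d * d') :=
    IsLocalRing.isUnit_one_sub_self_of_mem_nonunits _ ((IsLocalRing.mem_maximalIdeal _).mp hP)
  obtain ⟨w₀, hw₀⟩ := hunit
  have hγ'y : γ' • y = 0 := by
    have key2 : ((↑w₀ : R) * γ') • y = 0 := by rw [hw₀, mul_comm]; exact key
    calc γ' • y = (((↑w₀⁻¹ : R) * ↑w₀) * γ') • y := by rw [Units.inv_mul, one_mul]
    _ = (↑w₀⁻¹ : R) • (((↑w₀ : R) * γ') • y) := by rw [mul_assoc, mul_smul]
    _ = 0 := by rw [key2, smul_zero]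
  exact hbad' 0 (by rw [mul_zero, zero_smul, hs', mul_smul, hγ'y, smul_zero])

lemma twoBad (hval : IdealsTotallyOrdered R) {x y : F} {s s' : R}
    (hsB : s • x ∈ Submodule.span R {y}) (hbad : ∀ c : R, (s * c) • y ≠ s • x)
    (hs'B : s' • y ∈ Submodule.span R {x}) (hbad' : ∀ c : R, (s' * c) • x ≠ s' • y) : False := by
  obtain ⟨γ, d, hd, hs, hγy⟩ := bad_extract hval hsB hbad
  obtain ⟨γ', d', hd', hs', hγ'x⟩ := bad_extract hval hs'B hbad'
  rcases mem_span_or hval γ' γ with h | h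
  · obtain ⟨aa, haa⟩ := Ideal.mem_span_singleton'.mp h
    exact twoBadAux hd hd' hs hs' hγy hγ'x haa.symm hbad'
  · obtain ⟨aa, haa⟩ := Ideal.mem_span_singleton'.mp h
    exact twoBadAux hd' hd hs' hs hγ'x hγy haa.symm hbad

lemma solve_side (hAM : AlmostMaximalRing R) (hval : IdealsTotallyOrdered R) (hr : r ≠ 0)
    (hrP : r ∈ IsLocalRing.maximalIdeal R) (hF : IsInjectiveHull R ιF)
    {x y : F} (hy : y ≠ 0)
    (hgood : ∀ s : R, s • x ∈ Submodule.span R {y} → ∃ c, (s * c) • y = s • x) :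
    x ∈ Submodule.span R {y} := by
  classical
  set B : Ideal R := Submodule.comap (LinearMap.toSpanSingleton R F x) (Submodule.span R {y})
    with hB
  have hBmem : ∀ s : R, s ∈ B ↔ s • x ∈ Submodule.span R {y} := fun s => by
    simp [hB, LinearMap.toSpanSingleton_apply]
  have hc0 : ∀ s : ↥B, ∃ c, (s.1 * c) • y = s.1 • x := fun s => hgood s.1 ((hBmem s.1).mp s.2)
  choose c0 hc0spec using hc0
  set T : Ideal R := LinearMap.ker (LinearMap.toSpanSingleton R F y) with hT
  set Lf : ↥B → Ideal R := fun s => LinearMap.ker (LinearMap.toSpanSingleton R F (s.1 • y))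
    with hLf
  have hLmem : ∀ (s : ↥B) (w : R), w ∈ Lf s ↔ w • (s.1 • y) = 0 := fun s w => by
    simp [hLf, LinearMap.toSpanSingleton_apply]
  have hSol : ∀ (s : ↥B) (c : R), c ∈ {z : R | z - c0 s ∈ Lf s} ↔ (s.1 * c) • y = s.1 • x := by
    intro s c
    have hexp : (c - c0 s) • (s.1 • y) = (s.1 * c) • y - (s.1 * c0 s) • y := by
      rw [sub_smul, smul_smul, smul_smul, mul_comm c s.1, mul_comm (c0 s) s.1]
    rw [Set.mem_setOf_eq, hLmem, hexp, hc0spec s, sub_eq_zero]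
  have hchain : ∀ i j : ↥B, {z : R | z - c0 i ∈ Lf i} ⊆ {z : R | z - c0 j ∈ Lf j} ∨
      {z : R | z - c0 j ∈ Lf j} ⊆ {z : R | z - c0 i ∈ Lf i} := by
    have key : ∀ i j : ↥B, i.1 ∈ Ideal.span {j.1} →
        {z : R | z - c0 j ∈ Lf j} ⊆ {z : R | z - c0 i ∈ Lf i} := by
      intro i j hij c hc
      have hc' := (hSol j c).mp hc
      refine (hSol i c).mpr ?_
      obtain ⟨e, he⟩ := Ideal.mem_span_singleton'.mp hij
      rw [← he]
      calc ((e * j.1) * c) • y = (e * (j.1 * c)) • y := by rw [mul_assoc]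
      _ = e • ((j.1 * c) • y) := by rw [mul_smul]
      _ = e • (j.1 • x) := by rw [hc']
      _ = (e * j.1) • x := by rw [mul_smul]
    intro i j
    rcases mem_span_or hval i.1 j.1 with h | h
    · exact Or.inr (key i j h)
    · exact Or.inl (key j i h)
  have hextra : (∃ p q : R, p ≠ 0 ∧ q ≠ 0 ∧ p * q = 0) ∨ (⨅ s, Lf s) ≠ ⊥ := by
    by_cases hTbot : T = ⊥
    · left
      have hx₀ : ιF (Submodule.Quotient.mk 1) ≠ 0 := by
        intro h
        have h2 : (Submodule.Quotient.mk 1 : R ⧸ Ideal.span {r}) = 0 := by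
          apply hF.2.1
          rw [h, map_zero]
        obtain ⟨e, he⟩ := Ideal.mem_span_singleton'.mp ((Submodule.Quotient.mk_eq_zero _).mp h2)
        exact ((IsLocalRing.mem_maximalIdeal r).mp hrP)
          (IsUnit.of_mul_eq_one (a := r) e (by rw [mul_comm]; exact he))
      obtain ⟨aa, bb, hab, hne⟩ := exists_common hval hF hy hx₀
      have hr0 : r • ιF (Submodule.Quotient.mk 1) = 0 := by
        rw [← map_smul]
        have hmk : r • (Submodule.Quotient.mk 1 : R ⧸ Ideal.span {r}) = 0 := by
          rw [← mk_mul_smul, mul_one]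
          exact (Submodule.Quotient.mk_eq_zero _).mpr (Ideal.mem_span_singleton_self r)
        rw [hmk, map_zero]
      have hra : (r * aa) • y = 0 := by
        rw [mul_smul, hab, smul_comm, hr0, smul_zero]
      have haa0 : aa ≠ 0 := fun h => hne (by rw [h, zero_smul])
      have hraT : r * aa ∈ T := by
        rw [hT, LinearMap.mem_ker, LinearMap.toSpanSingleton_apply]
        exact hra
      rw [hTbot] at hraT
      exact ⟨r, aa, hr, haa0, by simpa using hraT⟩
    · right
      have hle : T ≤ ⨅ s, Lf s := by
        refine le_iInf fun s => ?_
        intro w hw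
        rw [hLmem]
        rw [hT, LinearMap.mem_ker, LinearMap.toSpanSingleton_apply] at hw
        rw [smul_comm, hw, smul_zero]
      intro h
      exact hTbot (le_bot_iff.mp (h ▸ hle))
  obtain ⟨c, hc⟩ := AMstrong hAM hval ↥B c0 Lf hchain hextra
  have hsys : ∀ s : ↥B, s.1 • (x - c • y) = 0 := by
    intro s
    have hmem := (hSol s c).mp (Set.mem_iInter.mp hc s)
    rw [smul_sub, smul_smul, hmem, sub_self]
  by_cases hz : x - c • y = 0
  · rw [sub_eq_zero] at hz
    rw [hz]
    exact Submodule.smul_mem _ c (Submodule.mem_span_singleton_self y)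
  · exfalso
    obtain ⟨aa, bb, hab, hne⟩ := exists_common hval hF hz hy
    have haB : aa ∈ B := by
      rw [hBmem]
      have hxe : aa • x = aa • (x - c • y) + (aa * c) • y := by
        rw [smul_sub, mul_smul]
        abel
      rw [hxe, hab]
      exact add_mem (Submodule.smul_mem _ bb (Submodule.mem_span_singleton_self y))
        (Submodule.smul_mem _ _ (Submodule.mem_span_singleton_self y))
    exact hne (hsys ⟨aa, haB⟩)

lemma cyclic_comparable (hAM : AlmostMaximalRing R) (hval : IdealsTotallyOrdered R)
    (hr : r ≠ 0) (hrP : r ∈ IsLocalRing.maximalIdeal R) (hF : IsInjectiveHull R ιF)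
    (x y : F) : x ∈ Submodule.span R {y} ∨ y ∈ Submodule.span R {x} := by
  by_cases hx : x = 0
  · exact Or.inl (by rw [hx]; exact Submodule.zero_mem _)
  by_cases hy : y = 0
  · exact Or.inr (by rw [hy]; exact Submodule.zero_mem _)
  by_cases hgood : ∀ s : R, s • x ∈ Submodule.span R {y} → ∃ c, (s * c) • y = s • x
  · exact Or.inl (solve_side hAM hval hr hrP hF hy hgood)
  by_cases hgood' : ∀ s : R, s • y ∈ Submodule.span R {x} → ∃ c, (s * c) • x = s • y
  · exact Or.inr (solve_side hAM hval hr hrP hF hx hgood')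
  exfalso
  push_neg at hgood hgood'
  obtain ⟨s, hsB, hbad⟩ := hgood
  obtain ⟨s', hs'B, hbad'⟩ := hgood'
  exact twoBad hval hsB hbad hs'B hbad'

lemma forward (hAM : AlmostMaximalRing R) (hval : IdealsTotallyOrdered R)
    (hr : r ≠ 0) (hrP : r ∈ IsLocalRing.maximalIdeal R) (hF : IsInjectiveHull R ιF) :
    UniserialModule R F := by
  intro N₁ N₂
  by_cases h12 : N₁ ≤ N₂
  · exact Or.inl h12
  right
  obtain ⟨x, hx1, hx2⟩ := SetLike.not_le_iff_exists.mp h12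
  intro y hy
  rcases cyclic_comparable hAM hval hr hrP hF x y with h | h
  · exact absurd ((Submodule.span_singleton_le_iff_mem _ _).mpr hy h) hx2
  · exact (Submodule.span_singleton_le_iff_mem _ _).mpr hx1 h

end Stmt14

/-- A valuation ring `R` (not a field) is almost maximal iff
`F = E(R/Rr)` (`0 ≠ r ∈ P`) is uniserial. -/
theorem stmt_14 (R : Type u) [CommRing R] [IsLocalRing R]
    (hval : IdealsTotallyOrdered R) (hnf : ¬ IsField R)
    (r : R) (hr : r ≠ 0) (hrP : r ∈ IsLocalRing.maximalIdeal R)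
    (F : Type u) [AddCommGroup F] [Module R F]
    (ιF : (R ⧸ Ideal.span {r}) →ₗ[R] F) (hF : IsInjectiveHull R ιF) :
    AlmostMaximalRing R ↔ UniserialModule R F :=
  ⟨fun hAM => Stmt14.forward hAM hval hr hrP hF,
   fun hU => Stmt14.backward hval hr hrP hF hU⟩
end

section
/- Let R be a commutative local ring with maximal ideal P, and let U be a uniserial R-module possessing a nonzero minimal submodule S (i.e. S ≠ 0 and S is contained in every nonzero submodule of U). Then U is a divisible module if and only if U is faithful. -/
universe u

/-- A uniserial module `U` with a nonzero minimal submodule `S` over a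
commutative local ring is divisible iff it is faithful. -/
theorem stmt_15 (R : Type u) [CommRing R] [IsLocalRing R]
    (U : Type u) [AddCommGroup U] [Module R U] (hU : UniserialModule R U)
    (S : Submodule R U) (hS : S ≠ ⊥)
    (hmin : ∀ N : Submodule R U, N ≠ ⊥ → S ≤ N) :
    (∀ (r : R) (x : U), (∀ a : R, a * r = 0 → a • x = 0) → ∃ y : U, x = r • y) ↔
    (∀ r : R, (∀ x : U, r • x = 0) → r = 0) := by

  obtain ⟨s, hsS, hs0⟩ := (Submodule.ne_bot_iff S).mp hS
  -- every nonunit annihilates s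
  have hPs : ∀ p : R, ¬ IsUnit p → p • s = 0 := by
    intro p hp
    by_contra hps
    have h1 : Submodule.span R {p • s} ≠ ⊥ := by
      simpa [Submodule.span_singleton_eq_bot] using hps
    have hsmem : s ∈ Submodule.span R {p • s} :=
      hmin _ h1 hsS
    obtain ⟨b, hb⟩ := Submodule.mem_span_singleton.mp hsmem
    have hzero : (1 - b * p) • s = 0 := by
      rw [sub_smul, one_smul, mul_smul, hb, sub_self]
    have hu : IsUnit (1 - b * p) :=
      IsLocalRing.isUnit_one_sub_self_of_mem_nonunits _ (by
        exact mul_mem_nonunits_right hp)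
    obtain ⟨c, hc⟩ := hu.exists_left_inv
    apply hs0
    calc s = (1 : R) • s := (one_smul R s).symm
      _ = (c * (1 - b * p)) • s := by rw [hc]
      _ = c • ((1 - b * p) • s) := mul_smul _ _ _
      _ = 0 := by rw [hzero, smul_zero]
  constructor
  · -- divisible → faithful
    intro hdiv r hr
    by_contra hr0
    have key : ∀ a : R, a * r = 0 → a • s = 0 := by
      intro a ha
      apply hPs
      intro hau
      apply hr0
      obtain ⟨c, hc⟩ := hau.exists_left_inv
      calc r = (c * a) * r := by rw [hc, one_mul]
        _ = c * (a * r) := mul_assoc _ _ _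
        _ = 0 := by rw [ha, mul_zero]
    obtain ⟨y, hy⟩ := hdiv r s key
    exact hs0 (hy.trans (hr y))
  · -- faithful → divisible
    intro hfaith r x hx
    by_cases hr0 : r = 0
    · refine ⟨0, ?_⟩
      have h1 : (1 : R) • x = 0 := hx 1 (by rw [hr0, mul_zero])
      rw [one_smul] at h1
      rw [h1, smul_zero]
    · by_contra hno
      push_neg at hno
      set N : Submodule R U := LinearMap.range (LinearMap.lsmul R U r) with hNdef
      have hxN : x ∉ N := by
        rintro ⟨y, hy⟩
        exact hno y hy.symm
      have hNx : N ≤ Submodule.span R {x} := by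
        rcases hU N (Submodule.span R {x}) with h | h
        · exact h
        · exact absurd (h (Submodule.mem_span_singleton_self x)) hxN
      have hN0 : N ≠ ⊥ := by
        intro h
        apply hr0
        apply hfaith r
        intro u
        have hmem : r • u ∈ N := ⟨u, rfl⟩
        rw [h, Submodule.mem_bot] at hmem
        exact hmem
      have hsN : s ∈ N := hmin N hN0 hsS
      obtain ⟨c0, hc0⟩ := Submodule.mem_span_singleton.mp (hNx hsN)
      have hcr : ∀ u : U, (c0 * r) • u = 0 := by
        intro u
        have hru : r • u ∈ N := ⟨u, rfl⟩
        obtain ⟨c, hc⟩ := Submodule.mem_span_singleton.mp (hNx hru)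
        have hcnon : ¬ IsUnit c := by
          intro hcu
          apply hxN
          obtain ⟨d, hd⟩ := hcu.exists_left_inv
          refine ⟨d • u, ?_⟩
          show r • (d • u) = x
          calc r • (d • u) = d • (r • u) := smul_comm _ _ _
            _ = d • (c • x) := by rw [hc]
            _ = (d * c) • x := (mul_smul _ _ _).symm
            _ = x := by rw [hd, one_smul]
        calc (c0 * r) • u = c0 • (r • u) := mul_smul _ _ _
          _ = c0 • (c • x) := by rw [hc]
          _ = c • (c0 • x) := smul_comm _ _ _
          _ = c • s := by rw [hc0]
          _ = 0 := hPs c hcnon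
      have hc0r : c0 * r = 0 := hfaith _ hcr
      have : c0 • x = 0 := hx c0 hc0r
      rw [hc0] at this
      exact hs0 this
end

section
/- Let R be a valuation ring, A a proper ideal of R, and t ∈ R∖A. Then A^# = (A:t)^#, where for a proper ideal B of R, B^# = {s ∈ R : (B:s) ≠ B}. -/
universe u

/-- For a proper ideal `A` of a valuation ring `R` and `t ∈ R ∖ A`,
`A^# = (A:t)^#`, where `B^# = {s : (B:s) ≠ B}` and `(B:s)` is the colon ideal. -/
theorem stmt_16 (R : Type u) [CommRing R] (hval : IdealsTotallyOrdered R)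
    (A : Ideal R) (hA : A ≠ ⊤) (t : R) (ht : t ∉ A) :
    {s : R | A.colon (Ideal.span {s}) ≠ A} =
      {s : R | (A.colon (Ideal.span {t})).colon (Ideal.span {s}) ≠
        A.colon (Ideal.span {t})} := by
  have key : ∀ (C D : Ideal R), C ≤ D → C ≠ D → t ∉ C →
      C.colon (Ideal.span {t}) ≠ D.colon (Ideal.span {t}) := by
    intro C D hCD hne htC
    obtain ⟨x, hxD, hxC⟩ : ∃ x, x ∈ D ∧ x ∉ C := by
      by_contra h
      push_neg at h
      exact hne (le_antisymm hCD h)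
    rcases hval (Ideal.span {x}) (Ideal.span {t}) with h | h
    · have : x ∈ Ideal.span ({t} : Set R) := h (Ideal.mem_span_singleton_self x)
      obtain ⟨y, hy⟩ := Ideal.mem_span_singleton.mp this
      intro heq
      have hyD : y ∈ D.colon (Ideal.span {t}) := by
        rw [Ideal.mem_colon_span_singleton]
        rw [hy] at hxD
        rwa [mul_comm]
      rw [← heq, Ideal.mem_colon_span_singleton] at hyD
      rw [mul_comm, ← hy] at hyD
      exact hxC hyD
    · have : t ∈ Ideal.span ({x} : Set R) := h (Ideal.mem_span_singleton_self t)
      obtain ⟨c, hc⟩ := Ideal.mem_span_singleton.mp this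
      intro heq
      have h1 : (1 : R) ∈ D.colon (Ideal.span {t}) := by
        rw [Ideal.mem_colon_span_singleton, one_mul, hc, mul_comm]
        exact D.mul_mem_left c hxD
      rw [← heq, Ideal.mem_colon_span_singleton, one_mul] at h1
      exact htC h1
  have comm : ∀ (s : R), (A.colon (Ideal.span {t})).colon (Ideal.span {s}) =
      (A.colon (Ideal.span {s})).colon (Ideal.span {t}) := by
    intro s
    ext x
    simp only [Ideal.mem_colon_span_singleton]
    rw [mul_right_comm]
  have hle : ∀ (s : R), A ≤ A.colon (Ideal.span {s}) := by
    intro s x hx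
    rw [Ideal.mem_colon_span_singleton]
    exact A.mul_mem_right s hx
  ext s
  simp only [Set.mem_setOf_eq, not_iff_not]
  constructor
  · intro h
    rw [comm, h]
  · intro h
    by_contra hne
    exact key A (A.colon (Ideal.span {s})) (hle s) (Ne.symm hne) ht (by rw [← comm s, h])
end

section
/- Let R be an archimedean valuation ring, i.e. a valuation ring whose maximal ideal P is the only nonzero prime ideal. Then P is a countably generated ideal. -/
universe u

section AuxStmt17

variable {R : Type u} [CommRing R] [IsLocalRing R]

/-- In a ring whose ideals are totally ordered, divisibility is total. -/
lemma aux17_chain (hval : IdealsTotallyOrdered R) (x y : R) : x ∣ y ∨ y ∣ x := by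
  rcases hval (Ideal.span {y}) (Ideal.span {x}) with h | h
  · exact Or.inl (Ideal.span_singleton_le_span_singleton.mp h)
  · exact Or.inr (Ideal.span_singleton_le_span_singleton.mp h)

/-- Archimedean property: for nonzero `x` in the maximal ideal and any `y` in the
maximal ideal, some (positive) power of `y` is divisible by `x`. -/
lemma aux17_arch
    (harch : ∀ J : Ideal R, J.IsPrime → J ≠ ⊥ → J = IsLocalRing.maximalIdeal R)
    {x : R} (hx : x ∈ IsLocalRing.maximalIdeal R) (hx0 : x ≠ 0)
    {y : R} (hy : y ∈ IsLocalRing.maximalIdeal R) :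
    ∃ n : ℕ, x ∣ y ^ (n + 1) := by
  have hrad : IsLocalRing.maximalIdeal R ≤ (Ideal.span {x}).radical := by
    rw [Ideal.radical_eq_sInf]
    refine le_sInf ?_
    rintro J ⟨hJ1, hJ2⟩
    have hxJ : x ∈ J := hJ1 (Ideal.subset_span (Set.mem_singleton x))
    have hJb : J ≠ ⊥ := by
      rintro rfl
      exact hx0 (by simpa using hxJ)
    exact le_of_eq (harch J hJ2 hJb).symm
  obtain ⟨n, hn⟩ : ∃ n, y ^ n ∈ Ideal.span {x} := by
    have := hrad hy
    rwa [Ideal.mem_radical_iff] at this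
  refine ⟨n, Ideal.mem_span_singleton.mp ?_⟩
  rw [pow_succ]
  exact Ideal.mul_mem_right _ _ hn

/-- Key division lemma. -/
lemma aux17_div (hval : IdealsTotallyOrdered R) {a b c : R} {m n : ℕ}
    (haP : a ∈ IsLocalRing.maximalIdeal R) (ham : a ^ m ≠ 0)
    (h1 : b ^ n ∣ a ^ m) (h2 : a ^ (m + 1) ∣ c ^ n) : b ∣ c := by
  rcases aux17_chain hval b c with h | h
  · exact h
  · exfalso
    obtain ⟨r, hr⟩ := h
    obtain ⟨t, ht⟩ := h1
    obtain ⟨s, hs⟩ := h2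
    have hbn : b ^ n = c ^ n * r ^ n := by rw [hr, mul_pow]
    have h3 : a ^ m = a ^ (m + 1) * (s * (r ^ n * t)) := by
      rw [ht, hbn, hs]; ring
    set u := a * (s * (r ^ n * t)) with hu
    have huP : u ∈ IsLocalRing.maximalIdeal R := Ideal.mul_mem_right _ _ haP
    have hunit : IsUnit (1 - u) :=
      IsLocalRing.isUnit_one_sub_self_of_mem_nonunits _
        ((IsLocalRing.mem_maximalIdeal u).mp huP)
    have hz : a ^ m * (1 - u) = 0 := by
      rw [hu]
      linear_combination h3
    obtain ⟨v, hv⟩ := hunit.exists_right_inv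
    apply ham
    calc a ^ m = a ^ m * ((1 - u) * v) := by rw [hv, mul_one]
      _ = a ^ m * (1 - u) * v := by ring
      _ = 0 := by rw [hz, zero_mul]

/-- If every element of the maximal ideal is nilpotent of bounded index, then the
maximal ideal is principal. -/
lemma aux17_nilp (hval : IdealsTotallyOrdered R) (t : ℕ)
    (ht : ∀ x ∈ IsLocalRing.maximalIdeal R, x ^ t = 0) :
    ∃ g : R, IsLocalRing.maximalIdeal R = Ideal.span {g} := by
  by_contra hng
  push_neg at hng
  have stepA : ∀ x ∈ IsLocalRing.maximalIdeal R,
      ∃ z ∈ IsLocalRing.maximalIdeal R, z * z ∣ x := by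
    intro x hx
    have hle : Ideal.span {x} ≤ IsLocalRing.maximalIdeal R := by
      rw [Ideal.span_le]; simpa using hx
    obtain ⟨y, hy, hxy⟩ : ∃ y ∈ IsLocalRing.maximalIdeal R, ¬ x ∣ y := by
      by_contra h
      push_neg at h
      exact hng x (le_antisymm
        (fun y hy => Ideal.mem_span_singleton.mpr (h y hy)) hle)
    have hyx : y ∣ x := (aux17_chain hval x y).resolve_left hxy
    obtain ⟨s, hs⟩ := hyx
    have hsU : ¬ IsUnit s := by
      rintro ⟨v, rfl⟩
      exact hxy ⟨↑v⁻¹, by rw [hs, mul_assoc, Units.mul_inv, mul_one]⟩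
    have hsP : s ∈ IsLocalRing.maximalIdeal R :=
      (IsLocalRing.mem_maximalIdeal s).mpr hsU
    rcases aux17_chain hval s y with hsy | hys
    · obtain ⟨w, hw⟩ := hsy
      exact ⟨s, hsP, ⟨w, by rw [hs, hw]; ring⟩⟩
    · obtain ⟨w, hw⟩ := hys
      exact ⟨y, hy, ⟨w, by rw [hs, hw]; ring⟩⟩
  have stepB : ∀ i : ℕ, ∀ x ∈ IsLocalRing.maximalIdeal R,
      ∃ z ∈ IsLocalRing.maximalIdeal R, z ^ (2 ^ i) ∣ x := by
    intro i
    induction i with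
    | zero => exact fun x hx => ⟨x, hx, by simpa using dvd_refl x⟩
    | succ i ih =>
      intro x hx
      obtain ⟨z, hzP, hzx⟩ := ih x hx
      obtain ⟨w, hwP, hwz⟩ := stepA z hzP
      refine ⟨w, hwP, dvd_trans ?_ hzx⟩
      have : w ^ (2 ^ (i + 1)) = (w * w) ^ (2 ^ i) := by
        rw [← pow_two, ← pow_mul]
        congr 1
        rw [pow_succ]
        ring
      rw [this]
      exact pow_dvd_pow_of_dvd hwz _
  have stepC : ∀ x ∈ IsLocalRing.maximalIdeal R, x = 0 := by
    intro x hx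
    obtain ⟨z, hzP, hzx⟩ := stepB t x hx
    have h2t : t ≤ 2 ^ t := Nat.le_of_lt (Nat.lt_two_pow_self (n := t))
    have hz0 : z ^ (2 ^ t) = 0 := by
      have : z ^ (2 ^ t) = z ^ t * z ^ (2 ^ t - t) := by
        rw [← pow_add]
        congr 1
        omega
      rw [this, ht z hzP, zero_mul]
    rw [hz0] at hzx
    exact zero_dvd_iff.mp hzx
  apply hng 0
  have : Ideal.span ({(0 : R)} : Set R) = ⊥ := Ideal.span_singleton_eq_bot.mpr rfl
  rw [this, eq_bot_iff]
  intro x hx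
  simp [stepC x hx]

end AuxStmt17

/-- The maximal ideal of an archimedean valuation ring (its maximal ideal
is the only nonzero prime ideal) is countably generated. -/
theorem stmt_17 (R : Type u) [CommRing R] [IsLocalRing R]
    (hval : IdealsTotallyOrdered R)
    (harch : ∀ J : Ideal R, J.IsPrime → J ≠ ⊥ → J = IsLocalRing.maximalIdeal R) :
    ∃ s : Set R, s.Countable ∧ Ideal.span s = IsLocalRing.maximalIdeal R := by
  classical
  by_cases hp : ∃ g : R, IsLocalRing.maximalIdeal R = Ideal.span {g}
  · obtain ⟨g, hg⟩ := hp
    exact ⟨{g}, Set.countable_singleton g, hg.symm⟩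
  -- pick a with a * a ≠ 0
  have ha : ∃ a ∈ IsLocalRing.maximalIdeal R, a * a ≠ 0 := by
    by_contra h
    push_neg at h
    exact hp (aux17_nilp hval 2 (fun x hx => by rw [pow_two]; exact h x hx))
  obtain ⟨a, haP, ha2⟩ := ha
  have ha0 : a ≠ 0 := by rintro rfl; simpa using ha2
  set f : ℕ × ℕ → R := fun p =>
    if h : ∃ b, b ∈ IsLocalRing.maximalIdeal R ∧ b ^ p.2 ∣ a ^ p.1 then h.choose else 0
    with hf
  refine ⟨Set.range f, Set.countable_range f, le_antisymm ?_ ?_⟩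
  · rw [Ideal.span_le]
    rintro x ⟨p, rfl⟩
    by_cases h : ∃ b, b ∈ IsLocalRing.maximalIdeal R ∧ b ^ p.2 ∣ a ^ p.1
    · have : f p = h.choose := by rw [hf]; exact dif_pos h
      rw [this]
      exact h.choose_spec.1
    · have : f p = 0 := by rw [hf]; exact dif_neg h
      rw [this]
      exact zero_mem _
  · intro c hc
    by_cases hc0 : c = 0
    · rw [hc0]; exact zero_mem _
    suffices hS : ∃ m n : ℕ,
        a ^ m ≠ 0 ∧ (∃ b, b ∈ IsLocalRing.maximalIdeal R ∧ b ^ n ∣ a ^ m) ∧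
          a ^ (m + 1) ∣ c ^ n by
      obtain ⟨m, n, ham, hex, hcn⟩ := hS
      have hfeq : f (m, n) = hex.choose := by rw [hf]; exact dif_pos hex
      have hw : f (m, n) ∈ IsLocalRing.maximalIdeal R ∧ (f (m, n)) ^ n ∣ a ^ m := by
        rw [hfeq]; exact hex.choose_spec
      have hdvd : f (m, n) ∣ c := aux17_div hval haP ham hw.2 hcn
      obtain ⟨d, hd⟩ := hdvd
      rw [hd]
      exact Ideal.mul_mem_right _ _ (Ideal.subset_span ⟨(m, n), rfl⟩)
    by_cases hnil : ∃ k, a ^ k = 0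
    · -- nilpotent case
      set k := Nat.find hnil with hkdef
      have hk : a ^ k = 0 := Nat.find_spec hnil
      have hkmin : ∀ m, m < k → a ^ m ≠ 0 := fun m hm => Nat.find_min hnil hm
      have hk3 : 3 ≤ k := by
        by_contra h
        push_neg at h
        have hcase : k = 0 ∨ k = 1 ∨ k = 2 := by omega
        rcases hcase with h' | h' | h'
        · rw [h', pow_zero] at hk; exact one_ne_zero hk
        · rw [h', pow_one] at hk; exact ha0 hk
        · rw [h', pow_two, ← pow_two] at hk
          rw [pow_two] at hk
          exact ha2 hk
      obtain ⟨q, hq⟩ := aux17_arch harch haP ha0 hc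
      set e := (q + 1) * k with hedef
      have hce : c ^ e = 0 := by
        obtain ⟨w, hw⟩ := hq
        rw [hedef, pow_mul, hw, mul_pow, hk, zero_mul]
      by_cases hwit : ∃ b, b ∈ IsLocalRing.maximalIdeal R ∧ b ^ e ∣ a ^ (k - 1)
      · refine ⟨k - 1, e, hkmin _ (by omega), hwit, ?_⟩
        have : (k - 1) + 1 = k := by omega
        rw [this, hce]
        exact dvd_zero _
      · exfalso
        apply hp
        apply aux17_nilp hval (2 * e)
        intro x hx
        have hxe : ¬ x ^ e ∣ a ^ (k - 1) := fun hd => hwit ⟨x, hx, hd⟩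
        have h1 : a ^ (k - 1) ∣ x ^ e := (aux17_chain hval _ _).resolve_left hxe
        have h2 : a ^ (k - 1) * a ^ (k - 1) ∣ x ^ e * x ^ e := mul_dvd_mul h1 h1
        have h3 : a ^ (k - 1) * a ^ (k - 1) = 0 := by
          rw [← pow_add]
          have : (k - 1) + (k - 1) = k + (k - 2) := by omega
          rw [this, pow_add, hk, zero_mul]
        rw [h3] at h2
        have : x ^ (2 * e) = x ^ e * x ^ e := by rw [two_mul, pow_add]
        rw [this]
        exact zero_dvd_iff.mp h2
    · -- reduced case
      push_neg at hnil
      have hpow : ∀ x ∈ IsLocalRing.maximalIdeal R, x ≠ 0 → ∀ i, x ^ i ≠ 0 := by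
        intro x hx hx0 i hxi
        obtain ⟨t, ht⟩ := aux17_arch harch hx hx0 haP
        obtain ⟨w, hw⟩ := ht
        apply hnil ((t + 1) * i)
        rw [pow_mul, hw, mul_pow, hxi, zero_mul]
      obtain ⟨b, hbP, hcb⟩ : ∃ b ∈ IsLocalRing.maximalIdeal R, ¬ c ∣ b := by
        by_contra h
        push_neg at h
        refine hp ⟨c, le_antisymm (fun y hy => Ideal.mem_span_singleton.mpr (h y hy)) ?_⟩
        rw [Ideal.span_le]
        simpa using hc
      have hbc : b ∣ c := (aux17_chain hval c b).resolve_left hcb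
      obtain ⟨r, hr⟩ := hbc
      have hrU : ¬ IsUnit r := by
        rintro ⟨v, rfl⟩
        exact hcb ⟨↑v⁻¹, by rw [hr, mul_assoc, Units.mul_inv, mul_one]⟩
      have hrP : r ∈ IsLocalRing.maximalIdeal R := (IsLocalRing.mem_maximalIdeal r).mpr hrU
      have hb0 : b ≠ 0 := by rintro rfl; exact hc0 (by rw [hr, zero_mul])
      obtain ⟨j, hj⟩ := aux17_arch harch haP ha0 hrP
      set n := (j + 1) * 2 with hndef
      have hbnP : b ^ n ∈ IsLocalRing.maximalIdeal R :=
        Ideal.pow_mem_of_mem _ hbP n (by omega)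
      have hbn0 : b ^ n ≠ 0 := hpow b hbP hb0 n
      obtain ⟨M, hM⟩ := aux17_arch harch hbnP hbn0 haP
      have hMex : ∃ m, b ^ n ∣ a ^ m := ⟨M + 1, hM⟩
      set m := Nat.find hMex with hmdef
      have hm1 : b ^ n ∣ a ^ m := Nat.find_spec hMex
      have hmpos : 1 ≤ m := by
        by_contra h
        push_neg at h
        have hm0 : m = 0 := by omega
        have : IsUnit (b ^ n) := isUnit_of_dvd_one (by rw [← pow_zero a, ← hm0]; exact hm1)
        exact ((IsLocalRing.mem_maximalIdeal _).mp hbnP) this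
      have hprev : ¬ b ^ n ∣ a ^ (m - 1) := Nat.find_min hMex (by omega)
      have hd1 : a ^ (m - 1) ∣ b ^ n := (aux17_chain hval _ _).resolve_left hprev
      have hd2 : a ^ 2 ∣ r ^ n := by
        have h := pow_dvd_pow_of_dvd hj 2
        rw [← pow_mul] at h
        rw [hndef]
        exact h
      refine ⟨m, n, hnil m, ⟨b, hbP, hm1⟩, ?_⟩
      have hcn : c ^ n = b ^ n * r ^ n := by rw [hr, mul_pow]
      have : a ^ (m + 1) = a ^ (m - 1) * a ^ 2 := by
        rw [← pow_add]
        congr 1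
        omega
      rw [this, hcn]
      exact mul_dvd_mul hd1 hd2
end
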